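/- Consider the loss L(V, W) = −(1/N) Σ_{n=1}^N Σ_{q=1}^Q α_q (Wᵀφ(Vx_n))ᵀ(Wᵀφ(Vx_{n,q})) / ((‖φ(Vx_n)‖ + δ')(‖φ(Vx_{n,q})‖ + δ')) with δ' = √M δ, δ > 0, α_q ∈ {−1,+1}, W ∈ ℝ^{M×Z} satisfying WᵀW = I_Z, inputs bounded as ‖x_n‖_∞, ‖x_{n,q}‖_∞ ≤ c_in, and φ L_φ-Lipschitz. Then every partial derivative of the loss with respect to an entry of V satisfies |∂L/∂V_ij| ≤ (4/√M)(Q L_φ c_in / δ); consequently, after t gradient-descent steps on V with learning rate η, |V_ij(t) − V_ij(0)| ≤ (t/√M)(4 η Q L_φ c_in / δ) for all entries (i, j). -/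

import Mathlib

open scoped RealInnerProductSpace BigOperators
open Matrix

noncomputable section

abbrev VParam (M D : ℕ) := EuclideanSpace ℝ (Fin M × Fin D)

def feat {M D : ℕ} (φ : ℝ → ℝ) (v : VParam M D) (x : EuclideanSpace ℝ (Fin D)) :
    EuclideanSpace ℝ (Fin M) :=
  WithLp.toLp 2 (fun m => φ (∑ d, v (m, d) * x d))

def wT {M Z : ℕ} (W : Matrix (Fin M) (Fin Z) ℝ) (h : EuclideanSpace ℝ (Fin M)) :
    EuclideanSpace ℝ (Fin Z) :=
  WithLp.toLp 2 (fun z => ∑ m, W m z * h m)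

/-- The normalized contrastive loss
`L = −(1/N) Σ_n Σ_q α_q (Wᵀφ(Vx_n))ᵀ(Wᵀφ(Vx_{n,q})) / ((‖φ(Vx_n)‖+δ')(‖φ(Vx_{n,q})‖+δ'))`. -/
def orthLoss {M D Z N Q : ℕ} (φ : ℝ → ℝ) (δ' : ℝ) (αs : Fin Q → ℝ)
    (X : Fin N → EuclideanSpace ℝ (Fin D)) (Xq : Fin N → Fin Q → EuclideanSpace ℝ (Fin D))
    (v : VParam M D) (W : Matrix (Fin M) (Fin Z) ℝ) : ℝ :=
  -((N : ℝ)⁻¹ * ∑ n, ∑ q,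
    αs q * ⟪wT W (feat φ v (X n)), wT W (feat φ v (Xq n q))⟫ /
      ((‖feat φ v (X n)‖ + δ') * (‖feat φ v (Xq n q)‖ + δ')))

lemma inner_euc {M : ℕ} (u w : EuclideanSpace ℝ (Fin M)) : ⟪u, w⟫ = ∑ m, u m * w m := by
  simp [PiLp.inner_apply, RCLike.inner_apply, mul_comm]

lemma norm_wT_le {M Z : ℕ} (W : Matrix (Fin M) (Fin Z) ℝ) (hW : Wᵀ * W = 1)
    (u : EuclideanSpace ℝ (Fin M)) : ‖wT W u‖ ≤ ‖u‖ := by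
  set t : EuclideanSpace ℝ (Fin Z) := wT W u with ht
  set p : EuclideanSpace ℝ (Fin M) := (WithLp.toLp 2 (fun m => ∑ z, W m z * t z) : EuclideanSpace ℝ (Fin M)) with hp
  have hWid : ∀ z z', (∑ m, W m z * W m z') = if z = z' then (1:ℝ) else 0 := by
    intro z z'
    have := congrFun (congrFun hW z) z'
    simpa [Matrix.mul_apply, Matrix.transpose_apply, Matrix.one_apply] using this
  have hup : ⟪u, p⟫ = ⟪t, t⟫ := by
    rw [inner_euc, inner_euc]
    calc ∑ m, u m * ∑ z, W m z * t z = ∑ m, ∑ z, u m * (W m z * t z) := by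
          simp_rw [Finset.mul_sum]
      _ = ∑ z, ∑ m, u m * (W m z * t z) := Finset.sum_comm
      _ = ∑ z, (∑ m, W m z * u m) * t z := by
          refine Finset.sum_congr rfl fun z _ => ?_
          rw [Finset.sum_mul]; exact Finset.sum_congr rfl fun m _ => by ring
      _ = ∑ z, t z * t z := rfl
  have hpp : ⟪p, p⟫ = ⟪t, t⟫ := by
    rw [inner_euc, inner_euc]
    calc ∑ m, (∑ z, W m z * t z) * (∑ z, W m z * t z)
        = ∑ m, ∑ z, ∑ z', (W m z * t z) * (W m z' * t z') := by
          refine Finset.sum_congr rfl fun m _ => ?_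
          rw [Finset.sum_mul_sum]
      _ = ∑ z, ∑ z', (∑ m, W m z * W m z') * (t z * t z') := by
          rw [Finset.sum_comm]
          refine Finset.sum_congr rfl fun z _ => ?_
          rw [Finset.sum_comm]
          refine Finset.sum_congr rfl fun z' _ => ?_
          rw [Finset.sum_mul]; exact Finset.sum_congr rfl fun m _ => by ring
      _ = ∑ z, t z * t z := by
          simp_rw [hWid]
          simp [Finset.sum_ite_eq]
  have hnp : ‖p‖ = ‖t‖ := by
    have h1 : ‖p‖ ^ 2 = ‖t‖ ^ 2 := by
      rw [← real_inner_self_eq_norm_sq, ← real_inner_self_eq_norm_sq, hpp]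

    nlinarith [norm_nonneg p, norm_nonneg t]
  have key : ‖t‖ ^ 2 ≤ ‖u‖ * ‖t‖ := by
    have := real_inner_le_norm u p
    rw [hup, real_inner_self_eq_norm_sq, hnp] at this
    exact this
  rcases eq_or_lt_of_le (norm_nonneg t) with h | h
  · rw [← h]; exact norm_nonneg u
  · nlinarith

lemma inner_wT_le {M Z : ℕ} (W : Matrix (Fin M) (Fin Z) ℝ) (hW : Wᵀ * W = 1)
    (u w : EuclideanSpace ℝ (Fin M)) : |⟪wT W u, wT W w⟫| ≤ ‖u‖ * ‖w‖ :=
  (abs_real_inner_le_norm _ _).trans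
    (mul_le_mul (norm_wT_le W hW u) (norm_wT_le W hW w) (norm_nonneg _) (norm_nonneg _))

lemma wT_sub {M Z : ℕ} (W : Matrix (Fin M) (Fin Z) ℝ) (u k : EuclideanSpace ℝ (Fin M)) :
    wT W u - wT W k = wT W (u - k) := by
  ext z
  simp [wT, Finset.sum_sub_distrib, mul_sub]

lemma S_diff_left {M Z : ℕ} (W : Matrix (Fin M) (Fin Z) ℝ) (hW : Wᵀ * W = 1)
    (δ' : ℝ) (hδ' : 0 < δ') (u k w : EuclideanSpace ℝ (Fin M)) :
    |⟪wT W u, wT W w⟫ / ((‖u‖ + δ') * (‖w‖ + δ')) -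
      ⟪wT W k, wT W w⟫ / ((‖k‖ + δ') * (‖w‖ + δ'))| ≤ 2 / δ' * ‖u - k‖ := by
  have ha : 0 < ‖u‖ + δ' := by positivity
  have ha' : 0 < ‖k‖ + δ' := by positivity
  have hb : 0 < ‖w‖ + δ' := by positivity
  have h1 : |⟪wT W u, wT W w⟫ - ⟪wT W k, wT W w⟫| ≤ ‖u - k‖ * ‖w‖ := by
    rw [← inner_sub_left, wT_sub]
    exact inner_wT_le W hW _ _
  have h2 : |⟪wT W k, wT W w⟫| ≤ ‖k‖ * ‖w‖ := inner_wT_le W hW _ _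
  have habs : |(‖k‖ + δ') - (‖u‖ + δ')| ≤ ‖u - k‖ := by
    have : |‖k‖ - ‖u‖| ≤ ‖k - u‖ := abs_norm_sub_norm_le k u
    rw [norm_sub_rev] at this
    calc |(‖k‖ + δ') - (‖u‖ + δ')| = |‖k‖ - ‖u‖| := by ring_nf
      _ ≤ ‖u - k‖ := this
  have hid : ⟪wT W u, wT W w⟫ / ((‖u‖ + δ') * (‖w‖ + δ')) -
      ⟪wT W k, wT W w⟫ / ((‖k‖ + δ') * (‖w‖ + δ')) =
      (⟪wT W u, wT W w⟫ - ⟪wT W k, wT W w⟫) / ((‖u‖ + δ') * (‖w‖ + δ')) +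
      ⟪wT W k, wT W w⟫ * (((‖k‖ + δ') - (‖u‖ + δ')) / ((‖u‖ + δ') * ((‖k‖ + δ') * (‖w‖ + δ')))) := by
    field_simp
    ring
  rw [hid]
  have T1 : |(⟪wT W u, wT W w⟫ - ⟪wT W k, wT W w⟫) / ((‖u‖ + δ') * (‖w‖ + δ'))|
      ≤ ‖u - k‖ / δ' := by
    rw [abs_div, abs_of_pos (show (0:ℝ) < (‖u‖ + δ') * (‖w‖ + δ') by positivity)]
    have step : |⟪wT W u, wT W w⟫ - ⟪wT W k, wT W w⟫| / ((‖u‖ + δ') * (‖w‖ + δ'))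
        ≤ (‖u - k‖ * (‖w‖ + δ')) / (δ' * (‖w‖ + δ')) :=
      div_le_div₀ (by positivity)
        (h1.trans (by nlinarith [norm_nonneg (u - k)]))
        (by positivity)
        (by nlinarith [norm_nonneg u, hb])
    rwa [mul_div_mul_right _ _ (ne_of_gt hb)] at step
  have T2 : |⟪wT W k, wT W w⟫ * (((‖k‖ + δ') - (‖u‖ + δ')) / ((‖u‖ + δ') * ((‖k‖ + δ') * (‖w‖ + δ'))))|
      ≤ ‖u - k‖ / δ' := by
    rw [abs_mul, abs_div, abs_of_pos (show (0:ℝ) < (‖u‖ + δ') * ((‖k‖ + δ') * (‖w‖ + δ')) by positivity)]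
    have step : |⟪wT W k, wT W w⟫| * (|(‖k‖ + δ') - (‖u‖ + δ')| / ((‖u‖ + δ') * ((‖k‖ + δ') * (‖w‖ + δ'))))
        ≤ ((‖k‖ + δ') * (‖w‖ + δ')) * (‖u - k‖ / (δ' * ((‖k‖ + δ') * (‖w‖ + δ')))) := by
      refine mul_le_mul (h2.trans (by nlinarith [norm_nonneg k, norm_nonneg w]))
        (div_le_div₀ (norm_nonneg _) habs (by positivity)
          (by nlinarith [mul_nonneg (norm_nonneg u) (mul_pos ha' hb).le])) (by positivity) (by positivity)
    calc _ ≤ _ := step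
      _ = ‖u - k‖ / δ' := by
          have hA : ((‖k‖ + δ') * (‖w‖ + δ')) ≠ 0 := by positivity
          field_simp
  calc |_ + _| ≤ _ + _ := abs_add_le _ _
    _ ≤ ‖u - k‖ / δ' + ‖u - k‖ / δ' := add_le_add T1 T2
    _ = 2 / δ' * ‖u - k‖ := by ring

lemma S_diff {M Z : ℕ} (W : Matrix (Fin M) (Fin Z) ℝ) (hW : Wᵀ * W = 1)
    (δ' : ℝ) (hδ' : 0 < δ') (u k w l : EuclideanSpace ℝ (Fin M)) :
    |⟪wT W u, wT W w⟫ / ((‖u‖ + δ') * (‖w‖ + δ')) -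
      ⟪wT W k, wT W l⟫ / ((‖k‖ + δ') * (‖l‖ + δ'))| ≤ 2 / δ' * (‖u - k‖ + ‖w - l‖) := by
  have key := abs_sub_le
    (⟪wT W u, wT W w⟫ / ((‖u‖ + δ') * (‖w‖ + δ')))
    (⟪wT W k, wT W w⟫ / ((‖k‖ + δ') * (‖w‖ + δ')))
    (⟪wT W k, wT W l⟫ / ((‖k‖ + δ') * (‖l‖ + δ')))
  have h1 := S_diff_left W hW δ' hδ' u k w
  have h2 : |⟪wT W k, wT W w⟫ / ((‖k‖ + δ') * (‖w‖ + δ')) -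
      ⟪wT W k, wT W l⟫ / ((‖k‖ + δ') * (‖l‖ + δ'))| ≤ 2 / δ' * ‖w - l‖ := by
    have := S_diff_left W hW δ' hδ' w l k
    rw [real_inner_comm (wT W k) (wT W w), real_inner_comm (wT W k) (wT W l),
      mul_comm (‖w‖ + δ'), mul_comm (‖l‖ + δ')] at this
    exact this
  calc _ ≤ _ := key
    _ ≤ 2 / δ' * ‖u - k‖ + 2 / δ' * ‖w - l‖ := add_le_add h1 h2
    _ = 2 / δ' * (‖u - k‖ + ‖w - l‖) := by ring

lemma feat_perturb {M D : ℕ} (φ : ℝ → ℝ) (Lφ cin : ℝ) (hLφ : 0 ≤ Lφ)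
    (hlip : ∀ a b, |φ a - φ b| ≤ Lφ * |a - b|)
    (v : VParam M D) (i : Fin M) (j : Fin D) (x : EuclideanSpace ℝ (Fin D))
    (hx : |x j| ≤ cin) (s t : ℝ) :
    ‖feat φ (v + s • EuclideanSpace.single (i, j) 1) x -
      feat φ (v + t • EuclideanSpace.single (i, j) 1) x‖ ≤ Lφ * cin * |s - t| := by
  have hsum : ∀ (r : ℝ) (m : Fin M),
      (∑ d, (v + r • EuclideanSpace.single ((i, j) : Fin M × Fin D) (1:ℝ)) (m, d) * x d)
        = (∑ d, v (m, d) * x d) + (if m = i then r * x j else 0) := by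
    intro r m
    have : ∀ d, (v + r • EuclideanSpace.single ((i, j) : Fin M × Fin D) (1:ℝ)) (m, d)
        = v (m, d) + (if m = i ∧ d = j then r else 0) := by
      intro d
      simp [EuclideanSpace.single_apply, Prod.ext_iff, mul_ite]
    simp_rw [this, add_mul, Finset.sum_add_distrib, ite_mul, zero_mul]
    congr 1
    by_cases hm : m = i
    · simp [hm]
    · simp [hm]
  have hdiff : feat φ (v + s • EuclideanSpace.single (i, j) 1) x -
      feat φ (v + t • EuclideanSpace.single (i, j) 1) x
      = EuclideanSpace.single i
          (φ ((∑ d, v (i, d) * x d) + s * x j) - φ ((∑ d, v (i, d) * x d) + t * x j)) := by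
    ext m
    rw [PiLp.sub_apply]
    simp only [feat, WithLp.ofLp_toLp]
    rw [hsum s m, hsum t m]
    by_cases hm : m = i
    · subst hm
      simp [EuclideanSpace.single_apply]
    · simp [hm, EuclideanSpace.single_apply]
  rw [hdiff, EuclideanSpace.norm_single]
  calc ‖φ ((∑ d, v (i, d) * x d) + s * x j) - φ ((∑ d, v (i, d) * x d) + t * x j)‖
      ≤ Lφ * |((∑ d, v (i, d) * x d) + s * x j) - ((∑ d, v (i, d) * x d) + t * x j)| :=
        hlip _ _
    _ = Lφ * (|x j| * |s - t|) := by
        rw [show ((∑ d, v (i, d) * x d) + s * x j) - ((∑ d, v (i, d) * x d) + t * x j)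
          = x j * (s - t) by ring, abs_mul]
    _ ≤ Lφ * (cin * |s - t|) := by
        have : |x j| * |s - t| ≤ cin * |s - t| :=
          mul_le_mul_of_nonneg_right hx (abs_nonneg _)
        exact mul_le_mul_of_nonneg_left this hLφ
    _ = Lφ * cin * |s - t| := by ring

lemma orthLoss_line_lip {M D Z N Q : ℕ} (hN : 0 < N)
    (φ : ℝ → ℝ) (δ' Lφ cin : ℝ) (hδ' : 0 < δ') (hLφ : 0 ≤ Lφ) (hcin : 0 ≤ cin)
    (hlip : ∀ a b, |φ a - φ b| ≤ Lφ * |a - b|)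
    (αs : Fin Q → ℝ) (hαs : ∀ q, αs q = 1 ∨ αs q = -1)
    (X : Fin N → EuclideanSpace ℝ (Fin D)) (Xq : Fin N → Fin Q → EuclideanSpace ℝ (Fin D))
    (hX : ∀ n d, |X n d| ≤ cin) (hXq : ∀ n q d, |Xq n q d| ≤ cin)
    (W : Matrix (Fin M) (Fin Z) ℝ) (hW : Wᵀ * W = 1)
    (v : VParam M D) (i : Fin M) (j : Fin D) (s t : ℝ) :
    |orthLoss φ δ' αs X Xq (v + s • EuclideanSpace.single (i, j) 1) W -
      orthLoss φ δ' αs X Xq (v + t • EuclideanSpace.single (i, j) 1) W|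
      ≤ (Q * (4 * Lφ * cin / δ')) * |s - t| := by
  set vs := v + s • EuclideanSpace.single ((i, j) : Fin M × Fin D) (1:ℝ) with hvs
  set vt := v + t • EuclideanSpace.single ((i, j) : Fin M × Fin D) (1:ℝ) with hvt
  set B : ℝ := 4 * Lφ * cin / δ' * |s - t| with hB
  have hterm : ∀ (n : Fin N) (q : Fin Q),
      |αs q * ⟪wT W (feat φ vs (X n)), wT W (feat φ vs (Xq n q))⟫ /
          ((‖feat φ vs (X n)‖ + δ') * (‖feat φ vs (Xq n q)‖ + δ')) -
        αs q * ⟪wT W (feat φ vt (X n)), wT W (feat φ vt (Xq n q))⟫ /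
          ((‖feat φ vt (X n)‖ + δ') * (‖feat φ vt (Xq n q)‖ + δ'))| ≤ B := by
    intro n q
    have hα : |αs q| = 1 := by rcases hαs q with h | h <;> simp [h]
    rw [mul_div_assoc, mul_div_assoc, ← mul_sub, abs_mul, hα, one_mul]
    have h1 : ‖feat φ vs (X n) - feat φ vt (X n)‖ ≤ Lφ * cin * |s - t| :=
      feat_perturb φ Lφ cin hLφ hlip v i j (X n) (hX n j) s t
    have h2 : ‖feat φ vs (Xq n q) - feat φ vt (Xq n q)‖ ≤ Lφ * cin * |s - t| :=
      feat_perturb φ Lφ cin hLφ hlip v i j (Xq n q) (hXq n q j) s t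
    calc |⟪wT W (feat φ vs (X n)), wT W (feat φ vs (Xq n q))⟫ /
          ((‖feat φ vs (X n)‖ + δ') * (‖feat φ vs (Xq n q)‖ + δ')) -
        ⟪wT W (feat φ vt (X n)), wT W (feat φ vt (Xq n q))⟫ /
          ((‖feat φ vt (X n)‖ + δ') * (‖feat φ vt (Xq n q)‖ + δ'))|
        ≤ 2 / δ' * (‖feat φ vs (X n) - feat φ vt (X n)‖ +
            ‖feat φ vs (Xq n q) - feat φ vt (Xq n q)‖) := S_diff W hW δ' hδ' _ _ _ _
      _ ≤ 2 / δ' * (Lφ * cin * |s - t| + Lφ * cin * |s - t|) := by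
          have h2' : (0:ℝ) ≤ 2 / δ' := by positivity
          exact mul_le_mul_of_nonneg_left (add_le_add h1 h2) h2'
      _ = B := by rw [hB]; field_simp; ring
  have hBnn : 0 ≤ B := by positivity
  have key : |(∑ n, ∑ q,
      αs q * ⟪wT W (feat φ vt (X n)), wT W (feat φ vt (Xq n q))⟫ /
        ((‖feat φ vt (X n)‖ + δ') * (‖feat φ vt (Xq n q)‖ + δ'))) -
      (∑ n, ∑ q,
      αs q * ⟪wT W (feat φ vs (X n)), wT W (feat φ vs (Xq n q))⟫ /
        ((‖feat φ vs (X n)‖ + δ') * (‖feat φ vs (Xq n q)‖ + δ')))| ≤ N * (Q * B) := by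
    rw [← Finset.sum_sub_distrib]
    calc _ ≤ ∑ n : Fin N, |(∑ q,
          αs q * ⟪wT W (feat φ vt (X n)), wT W (feat φ vt (Xq n q))⟫ /
            ((‖feat φ vt (X n)‖ + δ') * (‖feat φ vt (Xq n q)‖ + δ'))) -
          (∑ q,
          αs q * ⟪wT W (feat φ vs (X n)), wT W (feat φ vs (Xq n q))⟫ /
            ((‖feat φ vs (X n)‖ + δ') * (‖feat φ vs (Xq n q)‖ + δ')))| :=
        Finset.abs_sum_le_sum_abs _ _
      _ ≤ ∑ _n : Fin N, (Q * B) := by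
          refine Finset.sum_le_sum fun n _ => ?_
          rw [← Finset.sum_sub_distrib]
          calc _ ≤ ∑ q : Fin Q, |αs q * ⟪wT W (feat φ vt (X n)), wT W (feat φ vt (Xq n q))⟫ /
                ((‖feat φ vt (X n)‖ + δ') * (‖feat φ vt (Xq n q)‖ + δ')) -
              αs q * ⟪wT W (feat φ vs (X n)), wT W (feat φ vs (Xq n q))⟫ /
                ((‖feat φ vs (X n)‖ + δ') * (‖feat φ vs (Xq n q)‖ + δ'))| :=
              Finset.abs_sum_le_sum_abs _ _
            _ ≤ ∑ _q : Fin Q, B := Finset.sum_le_sum fun q _ => by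
                rw [abs_sub_comm]; exact hterm n q
            _ = Q * B := by rw [Finset.sum_const, Finset.card_univ, Fintype.card_fin,
                nsmul_eq_mul]
      _ = N * (Q * B) := by rw [Finset.sum_const, Finset.card_univ, Fintype.card_fin,
          nsmul_eq_mul]
  have hexp : orthLoss φ δ' αs X Xq vs W - orthLoss φ δ' αs X Xq vt W
      = (N : ℝ)⁻¹ * ((∑ n, ∑ q,
        αs q * ⟪wT W (feat φ vt (X n)), wT W (feat φ vt (Xq n q))⟫ /
          ((‖feat φ vt (X n)‖ + δ') * (‖feat φ vt (Xq n q)‖ + δ'))) -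
        (∑ n, ∑ q,
        αs q * ⟪wT W (feat φ vs (X n)), wT W (feat φ vs (Xq n q))⟫ /
          ((‖feat φ vs (X n)‖ + δ') * (‖feat φ vs (Xq n q)‖ + δ')))) := by
    rw [orthLoss, orthLoss]; ring
  rw [hexp, abs_mul, abs_of_nonneg (by positivity : (0:ℝ) ≤ (N:ℝ)⁻¹)]
  have hNpos : (0:ℝ) < N := by exact_mod_cast hN
  calc (N:ℝ)⁻¹ * |_| ≤ (N:ℝ)⁻¹ * ((N:ℝ) * (Q * B)) :=
      mul_le_mul_of_nonneg_left key (by positivity)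
    _ = Q * B := by field_simp
    _ = (Q * (4 * Lφ * cin / δ')) * |s - t| := by rw [hB]; ring

lemma grad_component_bound {M D Z N Q : ℕ} (hN : 0 < N)
    (φ : ℝ → ℝ) (δ' Lφ cin : ℝ) (hδ' : 0 < δ') (hLφ : 0 ≤ Lφ) (hcin : 0 ≤ cin)
    (hlip : ∀ a b, |φ a - φ b| ≤ Lφ * |a - b|)
    (αs : Fin Q → ℝ) (hαs : ∀ q, αs q = 1 ∨ αs q = -1)
    (X : Fin N → EuclideanSpace ℝ (Fin D)) (Xq : Fin N → Fin Q → EuclideanSpace ℝ (Fin D))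
    (hX : ∀ n d, |X n d| ≤ cin) (hXq : ∀ n q d, |Xq n q d| ≤ cin)
    (W : Matrix (Fin M) (Fin Z) ℝ) (hW : Wᵀ * W = 1)
    (v : VParam M D) (i : Fin M) (j : Fin D) :
    |gradient (fun v' => orthLoss φ δ' αs X Xq v' W) v (i, j)|
      ≤ Q * (4 * Lφ * cin / δ') := by
  set f : VParam M D → ℝ := fun v' => orthLoss φ δ' αs X Xq v' W with hf
  have hKnn : (0:ℝ) ≤ Q * (4 * Lφ * cin / δ') :=
    mul_nonneg (Nat.cast_nonneg _)
      (div_nonneg (mul_nonneg (mul_nonneg (by norm_num) hLφ) hcin) hδ'.le)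
  set E : VParam M D := EuclideanSpace.single ((i, j) : Fin M × Fin D) (1:ℝ) with hE
  have hgrad_app : gradient f v (i, j) = fderiv ℝ f v E := by
    have h1 : ⟪gradient f v, E⟫ = fderiv ℝ f v E := by
      show ⟪(InnerProductSpace.toDual ℝ (VParam M D)).symm (fderiv ℝ f v), E⟫ = _
      exact InnerProductSpace.toDual_symm_apply
    rw [← h1, hE, EuclideanSpace.inner_single_right]
    simp
  rw [hgrad_app]
  by_cases hdiff : DifferentiableAt ℝ f v
  · have e0 : v + (0:ℝ) • E = v := by simp
    have hline : HasDerivAt (fun s : ℝ => v + s • E) E 0 := by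
      have h0 : HasDerivAt (fun s : ℝ => s • E) ((1:ℝ) • E) 0 :=
        (hasDerivAt_id (0:ℝ)).smul_const E
      rw [one_smul] at h0
      exact h0.const_add v
    have hf' : HasFDerivAt f (fderiv ℝ f v) (v + (0:ℝ) • E) := by
      rw [e0]; exact hdiff.hasFDerivAt
    have hg : HasDerivAt (fun s : ℝ => f (v + s • E)) (fderiv ℝ f v E) 0 :=
      (hf'.comp_hasDerivAt (0:ℝ) hline : HasDerivAt (f ∘ fun s : ℝ => v + s • E) _ 0)
    have hglip : LipschitzWith (Real.toNNReal (Q * (4 * Lφ * cin / δ')))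
        (fun s : ℝ => f (v + s • E)) := by
      refine LipschitzWith.of_dist_le_mul fun s t => ?_
      rw [Real.dist_eq, Real.dist_eq, Real.coe_toNNReal _ hKnn]
      exact orthLoss_line_lip hN φ δ' Lφ cin hδ' hLφ hcin hlip αs hαs X Xq hX hXq W hW v i j s t
    have hb := hg.hasFDerivAt.le_of_lipschitz hglip
    rw [ContinuousLinearMap.norm_toSpanSingleton,
      Real.norm_eq_abs, Real.coe_toNNReal _ hKnn] at hb
    exact hb
  · rw [fderiv_zero_of_not_differentiableAt hdiff]
    simpa using hKnn

/-- bound on the first-layer partial derivatives of the normalized loss and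
on the accumulated weight change.  Every partial derivative satisfies
`|∂L/∂V_ij| ≤ (4/√M)(Q L_φ c_in/δ)`; consequently, after `t` gradient-descent steps on `V`
with learning rate `η`, `|V_ij(t) − V_ij(0)| ≤ (t/√M)(4 η Q L_φ c_in/δ)`. -/
theorem first_layer_gradient_bound
    (M D Z N Q : ℕ) (hM : 0 < M) (hN : 0 < N)
    (φ : ℝ → ℝ) (δ η cin Lφ : ℝ) (hδ : 0 < δ) (hη : 0 ≤ η)
    (hφd : Differentiable ℝ φ) (hφ' : ∀ u, |deriv φ u| ≤ Lφ)
    (αs : Fin Q → ℝ) (hαs : ∀ q, αs q = 1 ∨ αs q = -1)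
    (X : Fin N → EuclideanSpace ℝ (Fin D)) (Xq : Fin N → Fin Q → EuclideanSpace ℝ (Fin D))
    (hX : ∀ n d, |X n d| ≤ cin) (hXq : ∀ n q d, |Xq n q d| ≤ cin)
    (δ' : ℝ) (hδ' : δ' = Real.sqrt M * δ) :
    (∀ (W : Matrix (Fin M) (Fin Z) ℝ), Wᵀ * W = 1 →
      ∀ (v : VParam M D) (i : Fin M) (j : Fin D),
        |gradient (fun v' => orthLoss φ δ' αs X Xq v' W) v (i, j)|
          ≤ 4 / Real.sqrt M * (Q * Lφ * cin / δ))
    ∧ ∀ (V : ℕ → VParam M D) (W : ℕ → Matrix (Fin M) (Fin Z) ℝ),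
        (∀ t, (W t)ᵀ * W t = 1) →
        (∀ t, V (t + 1)
          = V t - η • gradient (fun v => orthLoss φ δ' αs X Xq v (W t)) (V t)) →
        ∀ (t : ℕ) (i : Fin M) (j : Fin D),
          |V t (i, j) - V 0 (i, j)| ≤ t / Real.sqrt M * (4 * η * Q * Lφ * cin / δ) := by

  have hsM : (0:ℝ) < Real.sqrt M := Real.sqrt_pos.mpr (by exact_mod_cast hM)
  have hδ'pos : (0:ℝ) < δ' := by rw [hδ']; positivity
  have hLφ0 : 0 ≤ Lφ := (abs_nonneg _).trans (hφ' 0)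
  have hL : LipschitzWith (Real.toNNReal Lφ) φ := by
    refine lipschitzWith_of_nnnorm_deriv_le hφd fun x => ?_
    rw [← NNReal.coe_le_coe, coe_nnnorm, Real.norm_eq_abs, Real.coe_toNNReal _ hLφ0]
    exact hφ' x
  have hlip : ∀ a b, |φ a - φ b| ≤ Lφ * |a - b| := by
    intro a b
    have := hL.dist_le_mul a b
    rwa [Real.dist_eq, Real.dist_eq, Real.coe_toNNReal _ hLφ0] at this
  have part1 : ∀ (W : Matrix (Fin M) (Fin Z) ℝ), Wᵀ * W = 1 →
      ∀ (v : VParam M D) (i : Fin M) (j : Fin D),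
        |gradient (fun v' => orthLoss φ δ' αs X Xq v' W) v (i, j)|
          ≤ 4 / Real.sqrt M * (Q * Lφ * cin / δ) := by
    intro W hW v i j
    have hcin : 0 ≤ cin := (abs_nonneg _).trans (hX ⟨0, hN⟩ j)
    have := grad_component_bound hN φ δ' Lφ cin hδ'pos hLφ0 hcin hlip αs hαs X Xq hX hXq
      W hW v i j
    calc |gradient (fun v' => orthLoss φ δ' αs X Xq v' W) v (i, j)|
        ≤ Q * (4 * Lφ * cin / δ') := this
      _ = 4 / Real.sqrt M * (Q * Lφ * cin / δ) := by
          rw [hδ']; field_simp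
  refine ⟨part1, ?_⟩
  intro V Ws hWs hupd t i j
  induction t with
  | zero => simp [hsM.le]
  | succ t ih =>
    have hcin : 0 ≤ cin := (abs_nonneg _).trans (hX ⟨0, hN⟩ j)
    have hstep : V (t + 1) (i, j) = V t (i, j) -
        η * gradient (fun v => orthLoss φ δ' αs X Xq v (Ws t)) (V t) (i, j) := by
      rw [hupd t, PiLp.sub_apply, PiLp.smul_apply, smul_eq_mul]
    have hgb := part1 (Ws t) (hWs t) (V t) i j
    calc |V (t + 1) (i, j) - V 0 (i, j)|
        = |(V t (i, j) - V 0 (i, j)) +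
            (-(η * gradient (fun v => orthLoss φ δ' αs X Xq v (Ws t)) (V t) (i, j)))| := by
          rw [hstep]; ring_nf
      _ ≤ |V t (i, j) - V 0 (i, j)| +
            η * |gradient (fun v => orthLoss φ δ' αs X Xq v (Ws t)) (V t) (i, j)| := by
          refine (abs_add_le _ _).trans ?_
          rw [abs_neg, abs_mul, abs_of_nonneg hη]
      _ ≤ t / Real.sqrt M * (4 * η * Q * Lφ * cin / δ) +
            η * (4 / Real.sqrt M * (Q * Lφ * cin / δ)) :=
          add_le_add ih (mul_le_mul_of_nonneg_left hgb hη)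
      _ = (t + 1 : ℕ) / Real.sqrt M * (4 * η * Q * Lφ * cin / δ) := by
          push_cast
          field_simp
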